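/- arXiv:1908.06228 — 2 statements merged into one kernel-verified Lean document; each statement's English description precedes it below -/
import Mathlib

section
/- Let L_T(g) = ∫₀ᵀ ∫_Z (g log g − g + 1) dν dt for Borel measurable g : [0,T]×Z → [0,∞), and S^N = {g : L_T(g) ≤ N}. If L ∈ L²(ν) is such that for every Γ with ν(Γ) < ∞ there exists δ > 0 with ∫_Γ e^{δ L²} dν < ∞, then sup over g ∈ S^N of ∫₀ᵀ ∫_Z L(z) |g(t,z) − 1| ν(dz) dt is finite. -/
/- STATEMENT 12: Let L_T(g) = ∫₀ᵀ∫_Z (g log g − g + 1) dν dt and S^N = {g : L_T(g) ≤ N}.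
If L ∈ L²(ν) (nonnegative, as the coefficient functions of the paper) is such that for
every Γ with ν(Γ) < ∞ there exists δ > 0 with ∫_Γ e^{δL²} dν < ∞, then
sup_{g ∈ S^N} ∫₀ᵀ∫_Z L(z)|g(t,z) − 1| ν(dz) dt < ∞. -/

open MeasureTheory
open scoped ENNReal

noncomputable section

/-- the entropy functional `L_T(g) = ∫₀ᵀ∫_Z (g log g − g + 1) dν dt`
(the integrand is nonnegative, so we use the lower Lebesgue integral). -/
def entT {Z : Type*} [MeasurableSpace Z] (ν : Measure Z) (T : ℝ) (g : ℝ → Z → ℝ) : ℝ≥0∞ :=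
  ∫⁻ t in Set.Icc 0 T, ∫⁻ z, ENNReal.ofReal (g t z * Real.log (g t z) - g t z + 1) ∂ν

/-- `g ∈ S^N`: Borel measurable, nonnegative, with entropy at most `N`. -/
def memSN {Z : Type*} [MeasurableSpace Z] (ν : Measure Z) (T : ℝ) (N : ℝ)
    (g : ℝ → Z → ℝ) : Prop :=
  Measurable (fun p : ℝ × Z => g p.1 p.2) ∧ (∀ t z, 0 ≤ g t z) ∧
    entT ν T g ≤ ENNReal.ofReal N

/-! Fenchel–Young for the entropy integrand `φ(g) = g log g - g + 1` gives
`l |g - 1| ≤ φ(g) + (eˡ - l - 1)`. Where `l < 1` the last term is at most `l²`, integrable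
since `L ∈ L²`. The set `{L ≥ 1}` has finite measure by Chebyshev, so on a measurable hull `Γ`
of it the hypothesis provides `δ` with `e^{δL²}` integrable, and there
`eˡ ≤ e^{1/(4δ)} e^{δl²}`. Integrating in `z` and then over `[0, T]` bounds the functional by
`N + T (∫ L² + e^{1/(4δ)} ∫_Γ e^{δL²})` for every `g ∈ S^N`. -/

open Real InformationTheory

/-- Fenchel–Young: the convex conjugate of `klFun` is `s ↦ exp s - s - 1`. -/
lemma mul_sub_one_le_klFun_add {g : ℝ} (s : ℝ) (hg : 0 ≤ g) :
    s * (g - 1) ≤ klFun g + (exp s - s - 1) := by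
  suffices g * s ≤ g * log g - g + exp s by rw [klFun_apply]; linarith
  rcases hg.eq_or_lt with rfl | hg
  · simpa using (exp_pos s).le
  · have h := add_one_le_exp (s - log g)
    rw [exp_sub, exp_log hg, le_div_iff₀ hg] at h
    linarith

lemma mul_abs_sub_one_le_klFun_add {u g : ℝ} (hu : 0 ≤ u) (hg : 0 ≤ g) :
    u * |g - 1| ≤ klFun g + (exp u - u - 1) := by
  rcases le_total 1 g with h | h
  · rw [abs_of_nonneg (sub_nonneg.2 h)]
    exact mul_sub_one_le_klFun_add u hg
  · have hsinh : u ≤ sinh u := self_le_sinh_iff.2 hu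
    rw [sinh_eq] at hsinh
    rw [abs_of_nonpos (sub_nonpos.2 h)]
    linarith [mul_sub_one_le_klFun_add (-u) hg]

lemma mul_abs_sub_one_le_klFun_add_sq {l g : ℝ} (hl : l < 1) (hg : 0 ≤ g) :
    l * |g - 1| ≤ klFun g + l ^ 2 := by
  rcases le_total l 0 with hl0 | hl0
  · nlinarith [klFun_nonneg hg, abs_nonneg (g - 1)]
  · have h := abs_exp_sub_one_sub_id_le (x := l) (abs_le.2 ⟨by linarith, hl.le⟩)
    linarith [mul_abs_sub_one_le_klFun_add hl0 hg, le_of_abs_le h]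

lemma exp_le_exp_inv_mul_exp_mul_sq {δ : ℝ} (hδ : 0 < δ) (u : ℝ) :
    exp u ≤ exp (4 * δ)⁻¹ * exp (δ * u ^ 2) := by
  rw [← exp_add, exp_le_exp, ← sub_nonneg]
  have : (4 * δ)⁻¹ + δ * u ^ 2 - u = (4 * δ)⁻¹ * (2 * δ * u - 1) ^ 2 := by
    field_simp
    ring
  rw [this]
  positivity

lemma mul_abs_sub_one_le_klFun_add_exp_mul_sq {δ l g : ℝ} (hδ : 0 < δ) (hl : 0 ≤ l)
    (hg : 0 ≤ g) : l * |g - 1| ≤ klFun g + exp (4 * δ)⁻¹ * exp (δ * l ^ 2) := by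
  linarith [mul_abs_sub_one_le_klFun_add hl hg, exp_le_exp_inv_mul_exp_mul_sq hδ l]

section

variable {Z : Type*} [MeasurableSpace Z] {ν : Measure Z}

lemma MeasureTheory.MemLp.measure_one_le_lt_top {p : ℝ≥0∞} {L : Z → ℝ} (hL : MemLp L p ν)
    (hp0 : p ≠ 0) (hptop : p ≠ ⊤) : ν {z | 1 ≤ L z} < ⊤ := by
  refine (measure_mono fun z (hz : 1 ≤ L z) => ?_).trans_lt
    (hL.meas_ge_lt_top hp0 hptop one_ne_zero)
  show (1 : NNReal) ≤ ‖L z‖₊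
  rw [← NNReal.coe_le_coe, coe_nnnorm, NNReal.coe_one, Real.norm_eq_abs]
  exact hz.trans (le_abs_self _)

lemma lintegral_mul_abs_sub_one_le {L h : Z → ℝ} {Γ : Set Z} {δ : ℝ} (hδ : 0 < δ)
    (hL : AEMeasurable L ν) (hΓ : MeasurableSet Γ) (hLΓ : {z | 1 ≤ L z} ⊆ Γ)
    (hh : Measurable h) (hh0 : ∀ z, 0 ≤ h z) :
    ∫⁻ z, ENNReal.ofReal (L z * |h z - 1|) ∂ν ≤ ∫⁻ z, ENNReal.ofReal (klFun (h z)) ∂ν +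
      (∫⁻ z, ENNReal.ofReal (L z ^ 2) ∂ν +
        ENNReal.ofReal (exp (4 * δ)⁻¹) * ∫⁻ z in Γ, ENNReal.ofReal (exp (δ * L z ^ 2)) ∂ν) := by
  have hpointwise : ∀ z, ENNReal.ofReal (L z * |h z - 1|) ≤
      ENNReal.ofReal (klFun (h z)) + (ENNReal.ofReal (L z ^ 2) + Γ.indicator
        (fun z => ENNReal.ofReal (exp (4 * δ)⁻¹) * ENNReal.ofReal (exp (δ * L z ^ 2))) z) := by
    intro z
    by_cases hz : 1 ≤ L z
    · rw [Set.indicator_of_mem (hLΓ hz), ← ENNReal.ofReal_mul (exp_pos _).le]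
      calc ENNReal.ofReal (L z * |h z - 1|)
          ≤ ENNReal.ofReal (klFun (h z)) +
              ENNReal.ofReal (exp (4 * δ)⁻¹ * exp (δ * L z ^ 2)) :=
            (ENNReal.ofReal_le_ofReal (mul_abs_sub_one_le_klFun_add_exp_mul_sq hδ
              (zero_le_one.trans hz) (hh0 z))).trans ENNReal.ofReal_add_le
        _ ≤ _ := by gcongr; exact le_add_self
    · calc ENNReal.ofReal (L z * |h z - 1|)
          ≤ ENNReal.ofReal (klFun (h z)) + ENNReal.ofReal (L z ^ 2) :=
            (ENNReal.ofReal_le_ofReal (mul_abs_sub_one_le_klFun_add_sq (not_le.1 hz)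
              (hh0 z))).trans ENNReal.ofReal_add_le
        _ ≤ _ := by gcongr; exact le_self_add
  refine (lintegral_mono hpointwise).trans_eq ?_
  have hkl : Measurable fun z => ENNReal.ofReal (klFun (h z)) :=
    (measurable_klFun.comp hh).ennreal_ofReal
  rw [lintegral_add_left hkl,
    lintegral_add_left' (hL.pow_const 2).ennreal_ofReal, lintegral_indicator hΓ,
    lintegral_const_mul' _ _ ENNReal.ofReal_ne_top]

end

lemma entT_eq_lintegral_klFun {Z : Type*} [MeasurableSpace Z] (ν : Measure Z) (T : ℝ)
    (g : ℝ → Z → ℝ) :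
    entT ν T g = ∫⁻ t in Set.Icc 0 T, ∫⁻ z, ENNReal.ofReal (klFun (g t z)) ∂ν := by
  simp only [entT, klFun_apply, add_sub_right_comm]

theorem statement12_general {Z : Type*} [MeasurableSpace Z] (ν : Measure Z)
    (T : ℝ) (N : ℝ)
    (L : Z → ℝ) (hL2 : MemLp L 2 ν)
    (hLexp : ∀ Γ : Set Z, MeasurableSet Γ → ν Γ < ⊤ →
      ∃ δ > 0, (∫⁻ z in Γ, ENNReal.ofReal (Real.exp (δ * (L z) ^ 2)) ∂ν) < ⊤) :
    ∃ C : ℝ≥0∞, C < ⊤ ∧ ∀ g : ℝ → Z → ℝ, memSN ν T N g →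
      (∫⁻ t in Set.Icc 0 T, ∫⁻ z, ENNReal.ofReal (L z * |g t z - 1|) ∂ν) ≤ C := by
  set Γ := toMeasurable ν {z | 1 ≤ L z}
  have hΓ : ν Γ < ⊤ := by
    rw [measure_toMeasurable]
    exact hL2.measure_one_le_lt_top two_ne_zero ENNReal.ofNat_ne_top
  obtain ⟨δ, hδ, hexp⟩ := hLexp Γ (measurableSet_toMeasurable ν _) hΓ
  set A := ∫⁻ z, ENNReal.ofReal (L z ^ 2) ∂ν +
    ENNReal.ofReal (exp (4 * δ)⁻¹) * ∫⁻ z in Γ, ENNReal.ofReal (exp (δ * L z ^ 2)) ∂ν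
  have hA : A < ⊤ := ENNReal.add_lt_top.2
    ⟨hL2.integrable_sq.lintegral_lt_top, ENNReal.mul_lt_top ENNReal.ofReal_lt_top hexp⟩
  refine ⟨ENNReal.ofReal N + ENNReal.ofReal T * A, ENNReal.add_lt_top.2
    ⟨ENNReal.ofReal_lt_top, ENNReal.mul_lt_top ENNReal.ofReal_lt_top hA⟩, ?_⟩
  rintro g ⟨hgm, hg0, hgent⟩
  rw [entT_eq_lintegral_klFun] at hgent
  calc ∫⁻ t in Set.Icc 0 T, ∫⁻ z, ENNReal.ofReal (L z * |g t z - 1|) ∂ν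
      ≤ ∫⁻ t in Set.Icc 0 T, (∫⁻ z, ENNReal.ofReal (klFun (g t z)) ∂ν + A) :=
        lintegral_mono fun t => lintegral_mul_abs_sub_one_le hδ
          hL2.aestronglyMeasurable.aemeasurable (measurableSet_toMeasurable ν _)
          (subset_toMeasurable ν _) (hgm.comp measurable_prodMk_left) (hg0 t)
    _ = (∫⁻ t in Set.Icc 0 T, ∫⁻ z, ENNReal.ofReal (klFun (g t z)) ∂ν) +
          ENNReal.ofReal T * A := by
        rw [lintegral_add_right _ measurable_const, setLIntegral_const, Real.volume_Icc,
          sub_zero, mul_comm]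
    _ ≤ ENNReal.ofReal N + ENNReal.ofReal T * A := by gcongr

theorem statement12 {Z : Type*} [MeasurableSpace Z] (ν : Measure Z) [SigmaFinite ν]
    (T : ℝ) (hT : 0 < T) (N : ℝ) (hN : 0 < N)
    (L : Z → ℝ) (hL0 : ∀ z, 0 ≤ L z) (hL2 : MemLp L 2 ν)
    (hLexp : ∀ Γ : Set Z, MeasurableSet Γ → ν Γ < ⊤ →
      ∃ δ > 0, (∫⁻ z in Γ, ENNReal.ofReal (Real.exp (δ * (L z) ^ 2)) ∂ν) < ⊤) :
    ∃ C : ℝ≥0∞, C < ⊤ ∧ ∀ g : ℝ → Z → ℝ, memSN ν T N g →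
      (∫⁻ t in Set.Icc 0 T, ∫⁻ z, ENNReal.ofReal (L z * |g t z - 1|) ∂ν) ≤ C :=
  statement12_general ν T N L hL2 hLexp
end
end

section
/- With L_T and S^N as above and L : Z → [0,∞) satisfying L ∈ L²(ν) and the exponential integrability condition on sets of finite ν-measure: for every ε > 0 there exists β > 0 such that for every Borel set A ⊂ [0,T] with Lebesgue measure at most β, sup_{g ∈ S^N} ∫_A ∫_Z L(z) |g(s,z) − 1| ν(dz) ds ≤ ε (uniform absolute continuity of the deviation integrals over S^N). -/
/- STATEMENT 13: With L_T and S^N as before and L : Z → [0,∞) with L ∈ L²(ν) and the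
exponential integrability condition on sets of finite ν-measure: for every ε > 0 there
exists β > 0 such that for every Borel set A ⊂ [0,T] of Lebesgue measure at most β,
sup_{g ∈ S^N} ∫_A ∫_Z L(z)|g(s,z) − 1| ν(dz) ds ≤ ε. -/

open MeasureTheory
open scoped ENNReal

noncomputable section

open InformationTheory Real Set

/-!
Fenchel–Young for `klFun b = b log b - b + 1`, whose convex conjugate is `e^t - 1 - t`, together
with `e^t - 1 - t ≤ t²` for `t ≤ 1`, gives for every `σ > 0` the pointwise bound
`L |g - 1| ≤ σ L² + 1_{σL > 1} e^{σL} / σ + klFun g / σ`.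
The part depending on `L` alone has a finite `ν`-integral `M_σ`: `L ∈ L²`, Chebyshev makes
`{σL > 1}` of finite measure, and there `e^{σL} ≤ e^{σ²/4δ} e^{δL²}`. So the double integral over
`A` is at most `M_σ |A| + N / σ`; take `σ = 2N/ε`, then `|A|` small.
-/

lemma mul_sub_one_le_exp_sub_add_klFun (t : ℝ) {b : ℝ} (hb : 0 ≤ b) :
    t * (b - 1) ≤ exp t - 1 - t + klFun b := by
  rw [klFun_apply]
  rcases hb.eq_or_lt with rfl | hb
  · linarith [exp_pos t]
  · have h := mul_le_mul_of_nonneg_left (add_one_le_exp (t - log b)) hb.le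
    rw [exp_sub, exp_log hb, mul_div_cancel₀ _ hb.ne'] at h
    linarith

lemma mul_abs_sub_one_le_exp_sub_add_klFun {t b : ℝ} (ht : 0 ≤ t) (hb : 0 ≤ b) :
    t * |b - 1| ≤ exp t - 1 - t + klFun b := by
  rcases le_total 1 b with h1 | h1
  · rw [abs_of_nonneg (sub_nonneg.2 h1)]
    exact mul_sub_one_le_exp_sub_add_klFun t hb
  · have hneg := mul_sub_one_le_exp_sub_add_klFun (-t) hb
    have hsinh : t ≤ sinh t := self_le_sinh_iff.2 ht
    rw [sinh_eq] at hsinh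
    rw [abs_of_nonpos (sub_nonpos.2 h1)]
    linarith

lemma exp_sub_one_sub_le {t : ℝ} (ht : 0 ≤ t) :
    exp t - 1 - t ≤ t ^ 2 + if 1 < t then exp t else 0 := by
  split_ifs with h
  · nlinarith
  · linarith [(abs_le.1 (abs_exp_sub_one_sub_id_le (abs_le.2 ⟨by linarith, not_lt.1 h⟩))).2]

lemma exp_mul_le_exp_mul_exp_mul_sq (σ a : ℝ) {δ : ℝ} (hδ : 0 < δ) :
    exp (σ * a) ≤ exp (σ ^ 2 / (4 * δ)) * exp (δ * a ^ 2) := by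
  rw [← exp_add, exp_le_exp, ← sub_le_iff_le_add, le_div_iff₀ (by positivity)]
  nlinarith [sq_nonneg (2 * δ * a - σ)]

def quadExpBound (σ a : ℝ) : ℝ :=
  σ * a ^ 2 + (if 1 < σ * a then exp (σ * a) else 0) / σ

lemma measurable_quadExpBound (σ : ℝ) : Measurable (quadExpBound σ) :=
  (measurable_const.mul (measurable_id.pow_const 2)).add <|
    (Measurable.ite (measurableSet_lt measurable_const (measurable_const.mul measurable_id))
      (by fun_prop) measurable_const).div_const σ

lemma mul_abs_sub_one_le_quadExpBound_add {σ a b : ℝ} (hσ : 0 < σ) (ha : 0 ≤ a) (hb : 0 ≤ b) :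
    a * |b - 1| ≤ quadExpBound σ a + klFun b / σ := by
  have hσa : 0 ≤ σ * a := mul_nonneg hσ.le ha
  have hyoung := mul_abs_sub_one_le_exp_sub_add_klFun hσa hb
  have hexp := exp_sub_one_sub_le hσa
  refine le_of_mul_le_mul_left ?_ hσ
  rw [quadExpBound, mul_add, mul_add, mul_div_cancel₀ _ hσ.ne', mul_div_cancel₀ _ hσ.ne']
  linarith

section

variable {Z : Type*} [MeasurableSpace Z] {ν : Measure Z} {L : Z → ℝ} {σ : ℝ}

lemma lintegral_lintegral_mul_abs_sub_one_le {S : Type*} [MeasurableSpace S] (μ : Measure S)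
    (hL : AEMeasurable L ν) (hL0 : ∀ z, 0 ≤ L z) (hσ : 0 < σ) {g : S → Z → ℝ}
    (hg : ∀ s z, 0 ≤ g s z) :
    ∫⁻ s, ∫⁻ z, ENNReal.ofReal (L z * |g s z - 1|) ∂ν ∂μ ≤
      (∫⁻ z, ENNReal.ofReal (quadExpBound σ (L z)) ∂ν) * μ univ
        + ENNReal.ofReal σ⁻¹ * ∫⁻ s, ∫⁻ z, ENNReal.ofReal (klFun (g s z)) ∂ν ∂μ := by
  set F : Z → ℝ≥0∞ := fun z => ENNReal.ofReal (quadExpBound σ (L z))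
  have hF : AEMeasurable F ν := ((measurable_quadExpBound σ).comp_aemeasurable hL).ennreal_ofReal
  have hpt : ∀ s z, ENNReal.ofReal (L z * |g s z - 1|) ≤
      F z + ENNReal.ofReal σ⁻¹ * ENNReal.ofReal (klFun (g s z)) := fun s z => by
    rw [← ENNReal.ofReal_mul (inv_nonneg.2 hσ.le), ← div_eq_inv_mul]
    exact (ENNReal.ofReal_le_ofReal (mul_abs_sub_one_le_quadExpBound_add hσ (hL0 z) (hg s z))).trans
      ENNReal.ofReal_add_le
  calc ∫⁻ s, ∫⁻ z, ENNReal.ofReal (L z * |g s z - 1|) ∂ν ∂μ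
      ≤ ∫⁻ s, ∫⁻ z, F z + ENNReal.ofReal σ⁻¹ * ENNReal.ofReal (klFun (g s z)) ∂ν ∂μ :=
        lintegral_mono fun s => lintegral_mono fun z => hpt s z
    _ = ∫⁻ s, (∫⁻ z, F z ∂ν) +
          ENNReal.ofReal σ⁻¹ * ∫⁻ z, ENNReal.ofReal (klFun (g s z)) ∂ν ∂μ := by
        simp_rw [lintegral_add_left' hF, lintegral_const_mul' _ _ ENNReal.ofReal_ne_top]
    _ = _ := by
        rw [lintegral_add_left measurable_const, lintegral_const,
          lintegral_const_mul' _ _ ENNReal.ofReal_ne_top]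

lemma measure_setOf_one_lt_mul_lt_top (hL0 : ∀ z, 0 ≤ L z) (hL2 : MemLp L 2 ν) (hσ : 0 < σ) :
    ν {z | 1 < σ * L z} < ⊤ := by
  refine (measure_mono fun z (hz : 1 < σ * L z) => ?_).trans_lt
    (hL2.meas_ge_lt_top_enorm two_ne_zero ENNReal.ofNat_ne_top
      (Real.toNNReal_pos.2 (inv_pos.2 hσ)).ne')
  change ENNReal.ofReal σ⁻¹ ≤ ‖L z‖ₑ
  rw [Real.enorm_eq_ofReal (hL0 z)]
  exact ENNReal.ofReal_le_ofReal ((inv_le_iff_one_le_mul₀' hσ).2 hz.le)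

lemma lintegral_quadExpBound_lt_top (hL0 : ∀ z, 0 ≤ L z) (hL2 : MemLp L 2 ν)
    (hLexp : ∀ Γ : Set Z, MeasurableSet Γ → ν Γ < ⊤ →
      ∃ δ > 0, (∫⁻ z in Γ, ENNReal.ofReal (Real.exp (δ * (L z) ^ 2)) ∂ν) < ⊤) (hσ : 0 < σ) :
    ∫⁻ z, ENNReal.ofReal (quadExpBound σ (L z)) ∂ν < ⊤ := by
  set Γ := toMeasurable ν {z | 1 < σ * L z}
  obtain ⟨δ, hδ, hexp⟩ := hLexp Γ (measurableSet_toMeasurable _ _)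
    ((measure_toMeasurable _).trans_lt (measure_setOf_one_lt_mul_lt_top hL0 hL2 hσ))
  set C := exp (σ ^ 2 / (4 * δ)) / σ
  have hpt : ∀ z, ENNReal.ofReal (quadExpBound σ (L z)) ≤ ENNReal.ofReal (σ * L z ^ 2) +
      Γ.indicator (fun z => ENNReal.ofReal C * ENNReal.ofReal (exp (δ * L z ^ 2))) z := by
    intro z
    refine ENNReal.ofReal_add_le.trans (add_le_add le_rfl ?_)
    split_ifs with h
    · rw [indicator_of_mem (subset_toMeasurable ν {z | 1 < σ * L z} h),
        ← ENNReal.ofReal_mul (by positivity), div_mul_eq_mul_div]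
      exact ENNReal.ofReal_le_ofReal
        (div_le_div_of_nonneg_right (exp_mul_le_exp_mul_exp_mul_sq σ (L z) hδ) hσ.le)
    · simp
  calc _ ≤ _ := lintegral_mono hpt
    _ = (∫⁻ z, ENNReal.ofReal (σ * L z ^ 2) ∂ν) +
          ENNReal.ofReal C * ∫⁻ z in Γ, ENNReal.ofReal (exp (δ * L z ^ 2)) ∂ν := by
        rw [lintegral_add_left' ((hL2.1.aemeasurable.pow_const 2).const_mul σ).ennreal_ofReal,
          lintegral_indicator (measurableSet_toMeasurable _ _),
          lintegral_const_mul' _ _ ENNReal.ofReal_ne_top]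
    _ < ⊤ := ENNReal.add_lt_top.2 ⟨(hL2.integrable_sq.const_mul σ).lintegral_lt_top,
        ENNReal.mul_lt_top ENNReal.ofReal_lt_top hexp⟩

end

lemma exists_pos_mul_ofReal_le {M : ℝ≥0∞} (hM : M ≠ ⊤) {ε : ℝ} (hε : 0 < ε) :
    ∃ β > 0, M * ENNReal.ofReal β ≤ ENNReal.ofReal ε := by
  refine ⟨ε / (M.toReal + 1), by positivity, ?_⟩
  rw [← ENNReal.ofReal_toReal hM, ← ENNReal.ofReal_mul ENNReal.toReal_nonneg,
    ENNReal.toReal_ofReal ENNReal.toReal_nonneg]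
  refine ENNReal.ofReal_le_ofReal ?_
  rw [mul_div_assoc', div_le_iff₀ (by positivity)]
  nlinarith [ENNReal.toReal_nonneg (a := M)]

lemma setLIntegral_lintegral_klFun_le {Z : Type*} [MeasurableSpace Z] {ν : Measure Z} {T N : ℝ}
    {g : ℝ → Z → ℝ} (hg : memSN ν T N g) {A : Set ℝ} (hA : A ⊆ Icc 0 T) :
    ∫⁻ s in A, ∫⁻ z, ENNReal.ofReal (klFun (g s z)) ∂ν ≤ ENNReal.ofReal N := by
  have hent : entT ν T g = ∫⁻ s in Icc 0 T, ∫⁻ z, ENNReal.ofReal (klFun (g s z)) ∂ν := by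
    simp only [entT, klFun_apply, sub_add_eq_add_sub]
  exact (lintegral_mono_set hA).trans (hent ▸ hg.2.2)

theorem statement13_general {Z : Type*} [MeasurableSpace Z] (ν : Measure Z)
    (T : ℝ) (N : ℝ) (hN : 0 < N)
    (L : Z → ℝ) (hL0 : ∀ z, 0 ≤ L z) (hL2 : MemLp L 2 ν)
    (hLexp : ∀ Γ : Set Z, MeasurableSet Γ → ν Γ < ⊤ →
      ∃ δ > 0, (∫⁻ z in Γ, ENNReal.ofReal (Real.exp (δ * (L z) ^ 2)) ∂ν) < ⊤) :
    ∀ ε > (0 : ℝ), ∃ β > (0 : ℝ), ∀ A : Set ℝ, MeasurableSet A → A ⊆ Set.Icc 0 T →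
      MeasureTheory.volume A ≤ ENNReal.ofReal β →
      ∀ g : ℝ → Z → ℝ, memSN ν T N g →
        (∫⁻ s in A, ∫⁻ z, ENNReal.ofReal (L z * |g s z - 1|) ∂ν) ≤ ENNReal.ofReal ε := by
  intro ε hε
  set σ := 2 * N / ε
  have hσ : 0 < σ := by positivity
  obtain ⟨β, hβ, hMβ⟩ :=
    exists_pos_mul_ofReal_le (lintegral_quadExpBound_lt_top hL0 hL2 hLexp hσ).ne (half_pos hε)
  refine ⟨β, hβ, fun A _ hAT hAβ g hg => ?_⟩
  have hbound := lintegral_lintegral_mul_abs_sub_one_le (volume.restrict A)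
    hL2.1.aemeasurable hL0 hσ hg.2.1
  rw [Measure.restrict_apply_univ] at hbound
  calc _ ≤ _ := hbound
    _ ≤ ENNReal.ofReal (ε / 2) + ENNReal.ofReal σ⁻¹ * ENNReal.ofReal N :=
        add_le_add ((mul_le_mul_right hAβ _).trans hMβ)
          (mul_le_mul_right (setLIntegral_lintegral_klFun_le hg hAT) _)
    _ = ENNReal.ofReal ε := by
        rw [← ENNReal.ofReal_mul (by positivity), ← ENNReal.ofReal_add (by positivity)
          (by positivity)]
        congr 1
        simp only [σ]
        field_simp
        ring

theorem statement13 {Z : Type*} [MeasurableSpace Z] (ν : Measure Z) [SigmaFinite ν]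
    (T : ℝ) (hT : 0 < T) (N : ℝ) (hN : 0 < N)
    (L : Z → ℝ) (hL0 : ∀ z, 0 ≤ L z) (hL2 : MemLp L 2 ν)
    (hLexp : ∀ Γ : Set Z, MeasurableSet Γ → ν Γ < ⊤ →
      ∃ δ > 0, (∫⁻ z in Γ, ENNReal.ofReal (Real.exp (δ * (L z) ^ 2)) ∂ν) < ⊤) :
    ∀ ε > (0 : ℝ), ∃ β > (0 : ℝ), ∀ A : Set ℝ, MeasurableSet A → A ⊆ Set.Icc 0 T →
      MeasureTheory.volume A ≤ ENNReal.ofReal β →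
      ∀ g : ℝ → Z → ℝ, memSN ν T N g →
        (∫⁻ s in A, ∫⁻ z, ENNReal.ofReal (L z * |g s z - 1|) ∂ν) ≤ ENNReal.ofReal ε :=
  statement13_general ν T N hN L hL0 hL2 hLexp

end
end
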